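/- If u_1,…,u_r ∈ ℝ^d are linearly independent and v_1,…,v_r ∈ ℝ^d are linearly independent, and λ_j, μ_j are nonzero scalars with Σ_{j=1}^r λ_j u_j^{⊗3} = Σ_{j=1}^r μ_j v_j^{⊗3}, then r is the same and there is a permutation π and scalars c_j ≠ 0 with v_{π(j)} = c_j u_j and μ_{π(j)} c_j³ = λ_j. -/

import Mathlib

section CPAux

variable {d r : ℕ} {α : Type*}

private lemma cpAux_sum_apply (s : Finset α) (f : α → EuclideanSpace ℝ (Fin d)) (i : Fin d) :
    (∑ j ∈ s, f j) i = ∑ j ∈ s, f j i := by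
  induction s using Finset.cons_induction with
  | empty => rfl
  | cons a s ha ih => simp [Finset.sum_cons, PiLp.add_apply, ih]

private lemma cpAux_li_pointwise {u : Fin r → EuclideanSpace ℝ (Fin d)}
    (hu : LinearIndependent ℝ u)
    (g : Fin r → ℝ) (h : ∀ i, ∑ j, g j * u j i = 0) : ∀ j, g j = 0 := by
  refine Fintype.linearIndependent_iff.mp hu g ?_
  ext i
  have : (∑ j, g j • u j) i = ∑ j, g j * u j i := by
    rw [cpAux_sum_apply]; simp [PiLp.smul_apply]
  rw [this, h i]; rfl

private lemma cpAux_exists_dual {v : Fin r → EuclideanSpace ℝ (Fin d)}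
    (hv : LinearIndependent ℝ v) :
    ∃ φ : Fin r → Module.Dual ℝ (EuclideanSpace ℝ (Fin d)),
      ∀ m n, φ m (v n) = if m = n then 1 else 0 := by
  classical
  have hs : LinearIndepOn ℝ id (Set.range v) :=
    (linearIndepOn_id_range_iff hv.injective).mpr hv
  let b := Module.Basis.extend hs
  have hmem : ∀ m, v m ∈ hs.extend (Set.subset_univ _) := fun m =>
    hs.subset_extend _ ⟨m, rfl⟩
  refine ⟨fun m => b.coord ⟨v m, hmem m⟩, fun m n => ?_⟩
  have h1 : b ⟨v n, hmem n⟩ = v n := Module.Basis.extend_apply_self hs _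
  have : b.coord ⟨v m, hmem m⟩ (b ⟨v n, hmem n⟩) =
      if (⟨v n, hmem n⟩ : hs.extend (Set.subset_univ _)) = ⟨v m, hmem m⟩ then 1 else 0 := by
    simp [Module.Basis.coord_apply, Module.Basis.repr_self, Finsupp.single_apply]
  rw [h1] at this
  rw [this]
  congr 1
  simp only [Subtype.mk.injEq, eq_iff_iff]
  constructor
  · intro h; exact (hv.injective h.symm)
  · intro h; rw [h]

private lemma cpAux_dual_as_sum (φ : Module.Dual ℝ (EuclideanSpace ℝ (Fin d)))
    (x : EuclideanSpace ℝ (Fin d)) :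
    φ x = ∑ k, x k * φ (EuclideanSpace.single k (1:ℝ)) := by
  have hx : x = ∑ k, x k • EuclideanSpace.single k (1:ℝ) := by
    ext i
    rw [cpAux_sum_apply]
    simp [EuclideanSpace.single_apply, PiLp.smul_apply]
  conv_lhs => rw [hx]
  rw [map_sum]
  simp [map_smul, smul_eq_mul]

private lemma cpAux_contract (w : Fin d → ℝ) (lam : Fin r → ℝ)
    (u : Fin r → EuclideanSpace ℝ (Fin d)) (i : Fin d) :
    ∑ k, ∑ l, w k * w l * (∑ j, lam j * (u j i * u j k * u j l))
      = ∑ j, lam j * u j i * (∑ k, w k * u j k) ^ 2 := by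
  calc ∑ k, ∑ l, w k * w l * (∑ j, lam j * (u j i * u j k * u j l))
      = ∑ k, ∑ l, ∑ j, w k * w l * (lam j * (u j i * u j k * u j l)) := by
        simp only [Finset.mul_sum]
    _ = ∑ k, ∑ j, ∑ l, w k * w l * (lam j * (u j i * u j k * u j l)) :=
        Finset.sum_congr rfl fun k _ => Finset.sum_comm
    _ = ∑ j, ∑ k, ∑ l, w k * w l * (lam j * (u j i * u j k * u j l)) := Finset.sum_comm
    _ = ∑ j, lam j * u j i * (∑ k, w k * u j k) ^ 2 := by
        refine Finset.sum_congr rfl fun j _ => ?_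
        rw [sq, Finset.sum_mul_sum]
        simp only [Finset.mul_sum]
        refine Finset.sum_congr rfl fun k _ => Finset.sum_congr rfl fun l _ => ?_
        ring

private lemma cpAux_expand3 (p q s : Fin r → ℝ) :
    (∑ j, p j) * (∑ j, q j) * (∑ j, s j) = ∑ j1, ∑ j2, ∑ j3, p j1 * q j2 * s j3 := by
  rw [Finset.sum_mul_sum, Finset.sum_mul]
  refine Finset.sum_congr rfl fun j1 _ => ?_
  rw [Finset.sum_mul]
  refine Finset.sum_congr rfl fun j2 _ => ?_
  rw [Finset.mul_sum]

private lemma cpAux_triple_indep {u : Fin r → EuclideanSpace ℝ (Fin d)}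
    (hu : LinearIndependent ℝ u) (c : Fin r → Fin r → Fin r → ℝ)
    (h : ∀ i k l, ∑ j1, ∑ j2, ∑ j3, c j1 j2 j3 * (u j1 i * u j2 k * u j3 l) = 0) :
    ∀ j1 j2 j3, c j1 j2 j3 = 0 := by
  have h1 : ∀ k l j1, ∑ j2, ∑ j3, c j1 j2 j3 * (u j2 k * u j3 l) = 0 := by
    intro k l
    refine cpAux_li_pointwise hu _ (fun i => ?_)
    rw [← h i k l]
    refine Finset.sum_congr rfl fun j1 _ => ?_
    simp only [Finset.sum_mul]
    refine Finset.sum_congr rfl fun j2 _ => Finset.sum_congr rfl fun j3 _ => ?_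
    ring
  have h2 : ∀ l j1 j2, ∑ j3, c j1 j2 j3 * u j3 l = 0 := by
    intro l j1
    refine cpAux_li_pointwise hu _ (fun k => ?_)
    rw [← h1 k l j1]
    refine Finset.sum_congr rfl fun j2 _ => ?_
    simp only [Finset.sum_mul]
    refine Finset.sum_congr rfl fun j3 _ => ?_
    ring
  intro j1 j2
  exact cpAux_li_pointwise hu _ (fun l => h2 l j1 j2)

end CPAux

/-- Uniqueness of the CP decomposition with linearly independent components: if
`Σ_j λ_j u_j^{⊗3} = Σ_j μ_j v_j^{⊗3}` with each family linearly independent and all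
coefficients nonzero, then there is a permutation `π` and nonzero scalars `c_j` with
`v_{π(j)} = c_j • u_j` and `μ_{π(j)} c_j³ = λ_j`. -/
theorem cp_decomposition_unique (d r : ℕ) (lam mu : Fin r → ℝ)
    (u v : Fin r → EuclideanSpace ℝ (Fin d))
    (hu : LinearIndependent ℝ u) (hv : LinearIndependent ℝ v)
    (hlam : ∀ j, lam j ≠ 0) (hmu : ∀ j, mu j ≠ 0)
    (heq : ∀ i k l : Fin d,
      ∑ j, lam j * (u j i * u j k * u j l) = ∑ j, mu j * (v j i * v j k * v j l)) :
    ∃ π : Equiv.Perm (Fin r), ∃ c : Fin r → ℝ,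
      ∀ j, c j ≠ 0 ∧ v (π j) = c j • u j ∧ mu (π j) * (c j) ^ 3 = lam j := by
  classical
  obtain ⟨φ, hφ⟩ := cpAux_exists_dual hv
  have hrepex : ∃ a : Fin r → Fin r → ℝ, ∀ m i, v m i = ∑ j, a m j * u j i := by
    refine ⟨fun m j => lam j * (φ m (u j)) ^ 2 * (mu m)⁻¹, fun m i => ?_⟩
    set w : Fin d → ℝ := fun k => φ m (EuclideanSpace.single k (1:ℝ)) with hw
    have hφx : ∀ x : EuclideanSpace ℝ (Fin d), (∑ k, w k * x k) = φ m x := by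
      intro x
      rw [cpAux_dual_as_sum (φ m) x]
      exact Finset.sum_congr rfl (fun k _ => mul_comm _ _)
    have key : ∑ j, lam j * u j i * (φ m (u j)) ^ 2
        = ∑ j, mu j * v j i * (φ m (v j)) ^ 2 := by
      have hsum : ∑ k, ∑ l, w k * w l * (∑ j, lam j * (u j i * u j k * u j l)) =
          ∑ k, ∑ l, w k * w l * (∑ j, mu j * (v j i * v j k * v j l)) :=
        Finset.sum_congr rfl fun k _ => Finset.sum_congr rfl fun l _ => by rw [heq i k l]
      rw [cpAux_contract w lam u i, cpAux_contract w mu v i] at hsum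
      simpa only [hφx] using hsum
    have hR : ∑ j, mu j * v j i * (φ m (v j)) ^ 2 = mu m * v m i := by
      rw [Finset.sum_eq_single m]
      · rw [hφ m m]; simp
      · intro j _ hjm
        rw [hφ m j, if_neg (fun h => hjm h.symm)]
        ring
      · intro h; exact absurd (Finset.mem_univ m) h
    have hmain : mu m * v m i = ∑ j, lam j * u j i * (φ m (u j)) ^ 2 := by
      rw [key, hR]
    have h2 : ∑ j, lam j * (φ m (u j)) ^ 2 * (mu m)⁻¹ * u j i
        = (mu m)⁻¹ * (mu m * v m i) := by
      rw [hmain, Finset.mul_sum]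
      refine Finset.sum_congr rfl fun j _ => ?_
      ring
    rw [inv_mul_cancel_left₀ (hmu m)] at h2
    exact h2.symm
  obtain ⟨a, hrep⟩ := hrepex
  -- coefficient identity
  have hcoef : ∀ j1 j2 j3,
      (if j1 = j2 ∧ j2 = j3 then lam j1 else 0) = ∑ m, mu m * (a m j1 * a m j2 * a m j3) := by
    have hzero : ∀ j1 j2 j3,
        ((if j1 = j2 ∧ j2 = j3 then lam j1 else 0) - ∑ m, mu m * (a m j1 * a m j2 * a m j3))
          = 0 := by
      refine cpAux_triple_indep hu _ (fun i k l => ?_)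
      have lhs1 : ∑ j1, ∑ j2, ∑ j3,
          (if j1 = j2 ∧ j2 = j3 then lam j1 else 0) * (u j1 i * u j2 k * u j3 l)
          = ∑ j, lam j * (u j i * u j k * u j l) := by
        refine Finset.sum_congr rfl fun j1 _ => ?_
        rw [Finset.sum_eq_single j1]
        · rw [Finset.sum_eq_single j1]
          · simp
          · intro j3 _ hj3; rw [if_neg (fun h => hj3 h.2.symm)]; ring
          · intro h; exact absurd (Finset.mem_univ j1) h
        · intro j2 _ hj2
          refine Finset.sum_eq_zero fun j3 _ => ?_
          rw [if_neg (fun h => hj2 h.1.symm)]; ring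
        · intro h; exact absurd (Finset.mem_univ j1) h
      have lhs2 : ∑ j1, ∑ j2, ∑ j3,
          (∑ m, mu m * (a m j1 * a m j2 * a m j3)) * (u j1 i * u j2 k * u j3 l)
          = ∑ m, mu m * (v m i * v m k * v m l) := by
        have expand : ∀ m, mu m * (v m i * v m k * v m l)
            = ∑ j1, ∑ j2, ∑ j3,
                mu m * (a m j1 * a m j2 * a m j3) * (u j1 i * u j2 k * u j3 l) := by
          intro m
          rw [hrep m i, hrep m k, hrep m l, cpAux_expand3]
          rw [Finset.mul_sum]
          refine Finset.sum_congr rfl fun j1 _ => ?_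
          rw [Finset.mul_sum]
          refine Finset.sum_congr rfl fun j2 _ => ?_
          rw [Finset.mul_sum]
          refine Finset.sum_congr rfl fun j3 _ => ?_
          ring
        calc ∑ j1, ∑ j2, ∑ j3,
              (∑ m, mu m * (a m j1 * a m j2 * a m j3)) * (u j1 i * u j2 k * u j3 l)
            = ∑ j1, ∑ j2, ∑ j3, ∑ m,
              mu m * (a m j1 * a m j2 * a m j3) * (u j1 i * u j2 k * u j3 l) := by
              simp only [Finset.sum_mul]
          _ = ∑ j1, ∑ j2, ∑ m, ∑ j3,
              mu m * (a m j1 * a m j2 * a m j3) * (u j1 i * u j2 k * u j3 l) :=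
              Finset.sum_congr rfl fun _ _ => Finset.sum_congr rfl fun _ _ => Finset.sum_comm
          _ = ∑ j1, ∑ m, ∑ j2, ∑ j3,
              mu m * (a m j1 * a m j2 * a m j3) * (u j1 i * u j2 k * u j3 l) :=
              Finset.sum_congr rfl fun _ _ => Finset.sum_comm
          _ = ∑ m, ∑ j1, ∑ j2, ∑ j3,
              mu m * (a m j1 * a m j2 * a m j3) * (u j1 i * u j2 k * u j3 l) :=
              Finset.sum_comm
          _ = ∑ m, mu m * (v m i * v m k * v m l) :=
              Finset.sum_congr rfl fun m _ => (expand m).symm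
      have : ∑ j1, ∑ j2, ∑ j3,
          ((if j1 = j2 ∧ j2 = j3 then lam j1 else 0) - ∑ m, mu m * (a m j1 * a m j2 * a m j3))
            * (u j1 i * u j2 k * u j3 l)
          = (∑ j1, ∑ j2, ∑ j3,
              (if j1 = j2 ∧ j2 = j3 then lam j1 else 0) * (u j1 i * u j2 k * u j3 l))
            - ∑ j1, ∑ j2, ∑ j3,
              (∑ m, mu m * (a m j1 * a m j2 * a m j3)) * (u j1 i * u j2 k * u j3 l) := by
        simp only [sub_mul, Finset.sum_sub_distrib]
      rw [this, lhs1, lhs2, heq i k l, sub_self]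
    intro j1 j2 j3
    have := hzero j1 j2 j3
    linarith [this]
  -- invertibility-type property of a
  have hA : ∀ b : Fin r → ℝ, (∀ j, ∑ k, b k * a k j = 0) → ∀ k, b k = 0 := by
    intro b hb
    refine cpAux_li_pointwise hv b (fun i => ?_)
    calc ∑ k, b k * v k i = ∑ k, ∑ j, b k * (a k j * u j i) := by
          refine Finset.sum_congr rfl fun k _ => ?_
          rw [hrep k i, Finset.mul_sum]
      _ = ∑ j, ∑ k, b k * (a k j * u j i) := Finset.sum_comm
      _ = ∑ j, (∑ k, b k * a k j) * u j i := by
          refine Finset.sum_congr rfl fun j _ => ?_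
          rw [Finset.sum_mul]
          exact Finset.sum_congr rfl fun k _ => by ring
      _ = 0 := by simp [hb]
  -- off-diagonal vanishing
  have offdiag : ∀ j1 j2, j1 ≠ j2 → ∀ k, a k j1 * a k j2 = 0 := by
    intro j1 j2 hne k
    have h0 : ∀ j3, ∑ m, (mu m * (a m j1 * a m j2)) * a m j3 = 0 := by
      intro j3
      have := (hcoef j1 j2 j3).symm
      rw [if_neg (fun h => hne h.1)] at this
      rw [← this]
      exact Finset.sum_congr rfl fun m _ => by ring
    have := hA (fun m => mu m * (a m j1 * a m j2)) h0 k
    exact (mul_eq_zero.mp this).resolve_left (hmu k)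
  -- diagonal identity
  have diag : ∀ j, ∑ k, mu k * a k j ^ 3 = lam j := by
    intro j
    have := (hcoef j j j).symm
    rw [if_pos ⟨rfl, rfl⟩] at this
    rw [← this]
    exact Finset.sum_congr rfl fun m _ => by ring
  -- each column has a nonzero entry
  have colnz : ∀ j, ∃ k, a k j ≠ 0 := by
    intro j
    by_contra hcon
    push_neg at hcon
    apply hlam j
    rw [← diag j]
    exact Finset.sum_eq_zero fun k _ => by rw [hcon k]; ring
  set f : Fin r → Fin r := fun j => (colnz j).choose with hf
  have hfa : ∀ j, a (f j) j ≠ 0 := fun j => (colnz j).choose_spec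
  have finj : Function.Injective f := by
    intro j1 j2 h
    by_contra hne
    have hz := offdiag j1 j2 hne (f j1)
    have h2 : a (f j1) j2 ≠ 0 := by rw [h]; exact hfa j2
    exact (mul_ne_zero (hfa j1) h2) hz
  have fbij : Function.Bijective f := Finite.injective_iff_bijective.mp finj
  set π : Equiv.Perm (Fin r) := Equiv.ofBijective f fbij with hπ
  have hπj : ∀ j, π j = f j := fun j => rfl
  refine ⟨π, fun j => a (f j) j, fun j => ?_⟩
  refine ⟨hfa j, ?_, ?_⟩
  · -- v (π j) = a (f j) j • u j
    ext i
    have : (a (f j) j • u j) i = a (f j) j * u j i := by simp [PiLp.smul_apply]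
    rw [hπj, this, hrep (f j) i]
    rw [Finset.sum_eq_single j]
    · intro m _ hmj
      have := offdiag m j hmj (f j)
      have ham : a (f j) m = 0 := (mul_eq_zero.mp this).resolve_right (hfa j)
      rw [ham]; ring
    · intro h; exact absurd (Finset.mem_univ j) h
  · -- mu (π j) * (a (f j) j)^3 = lam j
    rw [hπj, ← diag j]
    rw [Finset.sum_eq_single (f j)]
    · intro k _ hk
      obtain ⟨j', hj'⟩ := fbij.surjective k
      have hne : j ≠ j' := by
        intro h; apply hk; rw [h, hj']
      have := offdiag j j' hne k
      have : a k j = 0 := by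
        have h2 : a k j' ≠ 0 := by rw [← hj']; exact hfa j'
        exact (mul_eq_zero.mp this).resolve_right h2
      rw [this]; ring
    · intro h; exact absurd (Finset.mem_univ (f j)) h
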